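/- Solving the central charge equation Z_{V,ω,B}(ST_{O_C(t)}(E)) = g · Z_{V̄,ω̄,B̄}(E) on numerical invariants: with ω = C + (D_ω + e)D, ω̄ = C + (D_ω̄ + e)D (e = 2, D·C = 1, D² = 0, ψ = ψ̄ = 0), matching coefficients of the invariants (n, c, d, s) forces g = diag(1, (D_ω + e)/(D_ω̄ + e)) after the shear, and D_ω = -D_ω̄/(D_ω̄ + 1). -/

import Mathlib

/-! Only the imaginary parts matter. Comparing the coefficients of `c` and `d` there gives
`λ = D_ω + 1` and `D_ω + 2 = λ (D_ω̄ + 2)`, which together say `(D_ω + 1)(D_ω̄ + 1) = 1`. -/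

lemma eq_neg_div_of_add_two_eq_mul {K : Type*} [Field K] {x y : K} (hy : y + 1 ≠ 0)
    (h : x + 2 = (x + 1) * (y + 2)) : x = -y / (y + 1) :=
  eq_div_of_mul_eq hy (by linear_combination -h)

theorem stmt10_general (e : ℝ) (he : e = 2)
    (t V Dω RB DB ωB B2 : ℝ)          -- parameters of `Z_{V,ω,B}`
    (V' Dω' RB' DB' ωB' B2' : ℝ)       -- parameters of `Z_{V̄,ω̄,B̄}`
    (lam : ℝ)
    (hDω' : -1 < Dω')
    (ZT Zbar : ℝ × ℝ × ℝ × ℝ → ℝ × ℝ)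
    -- `Z_{V,ω,B} ∘ ST_{O_C(t)}` in the invariants `(n, c, d, s)`:
    (hZT : ∀ n c d s : ℝ, ZT (n, c, d, s) =
      (-s + (RB * (DB + 1) - (t + 1)) * c + RB * (DB + e) * d
          + ((t + 1) ^ 2 - RB * DB * (t + 1) + V + 1 - B2 / 2) * n,
       (Dω + 1) * c + (Dω + e) * d - (Dω * (t + 1) + ωB) * n))
    -- `Z_{V̄,ω̄,B̄}` in the invariants `(n, c, d, s)`:
    (hZbar : ∀ n c d s : ℝ, Zbar (n, c, d, s) =
      (-s + RB' * c + RB' * (DB' + e) * d + (V' + 1 - B2' / 2) * n,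
       c + (Dω' + e) * d - ωB' * n))
    -- the equation `shear ∘ ZT = diag(1, λ) ∘ Zbar`:
    (heq : ∀ n c d s : ℝ,
      ((ZT (n, c, d, s)).1 - RB * (DB + e) / (Dω + e) * (ZT (n, c, d, s)).2,
        (ZT (n, c, d, s)).2)
      = ((Zbar (n, c, d, s)).1, lam * (Zbar (n, c, d, s)).2)) :
    lam = (Dω + e) / (Dω' + e) ∧ Dω = -Dω' / (Dω' + 1) := by
  subst he
  have hc : Dω + 1 = lam := by
    simpa [hZT, hZbar] using congrArg Prod.snd (heq 0 1 0 0)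
  have hd : Dω + 2 = lam * (Dω' + 2) := by
    simpa [hZT, hZbar] using congrArg Prod.snd (heq 0 0 1 0)
  exact ⟨eq_div_of_mul_eq (by linarith) hd.symm,
    eq_neg_div_of_add_two_eq_mul (by linarith) (hc ▸ hd)⟩

/-- Solving the central charge equation `Z_{V,ω,B}(ST_{O_C(t)}(E)) = g · Z_{V̄,ω̄,B̄}(E)`
on numerical invariants `(n, c, d, s)` (with `e = 2`, `D·C = 1`, `D² = 0`, `ψ = ψ̄ = 0`):
if the sheared twisted central charge agrees with `diag(1, λ)` applied to the untwisted
central charge, then `λ = (D_ω + e)/(D_ω̄ + e)` and `D_ω = -D_ω̄/(D_ω̄ + 1)`. -/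
theorem stmt10 (e : ℝ) (he : e = 2)
    (t V Dω RB DB ωB B2 : ℝ)          -- parameters of `Z_{V,ω,B}`
    (V' Dω' RB' DB' ωB' B2' : ℝ)       -- parameters of `Z_{V̄,ω̄,B̄}`
    (lam : ℝ)
    (hDω' : -1 < Dω') (hωe : Dω + e ≠ 0)
    (ZT Zbar : ℝ × ℝ × ℝ × ℝ → ℝ × ℝ)
    -- `Z_{V,ω,B} ∘ ST_{O_C(t)}` in the invariants `(n, c, d, s)`:
    (hZT : ∀ n c d s : ℝ, ZT (n, c, d, s) =
      (-s + (RB * (DB + 1) - (t + 1)) * c + RB * (DB + e) * d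
          + ((t + 1) ^ 2 - RB * DB * (t + 1) + V + 1 - B2 / 2) * n,
       (Dω + 1) * c + (Dω + e) * d - (Dω * (t + 1) + ωB) * n))
    -- `Z_{V̄,ω̄,B̄}` in the invariants `(n, c, d, s)`:
    (hZbar : ∀ n c d s : ℝ, Zbar (n, c, d, s) =
      (-s + RB' * c + RB' * (DB' + e) * d + (V' + 1 - B2' / 2) * n,
       c + (Dω' + e) * d - ωB' * n))
    -- the equation `shear ∘ ZT = diag(1, λ) ∘ Zbar`:
    (heq : ∀ n c d s : ℝ,
      ((ZT (n, c, d, s)).1 - RB * (DB + e) / (Dω + e) * (ZT (n, c, d, s)).2,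
        (ZT (n, c, d, s)).2)
      = ((Zbar (n, c, d, s)).1, lam * (Zbar (n, c, d, s)).2)) :
    lam = (Dω + e) / (Dω' + e) ∧ Dω = -Dω' / (Dω' + 1) :=
  stmt10_general e he t V Dω RB DB ωB B2 V' Dω' RB' DB' ωB' B2' lam hDω' ZT Zbar hZT hZbar heq
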